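/- Let X be a compact metric space, f : X → X a Borel measurable map, and μ an f-invariant Borel probability measure on X. Assume that μ satisfies exponential large deviations for Lipschitz observables. Let a : ℕ → X → ℝ satisfy: (i) a (n+s) x ≤ a n (f^[s] x) + a s x for all integers n ≥ 1, s ≥ 1 and all x ∈ X; (ii) there is a constant C₀ ≥ 0 such that 0 ≤ a n x ≤ n · C₀ for all n ≥ 1 and x ∈ X; (iii) for every n ≥ 1 the function x ↦ a n x is upper semicontinuous on X. Set λ = inf over integers n ≥ 1 of (1/n) ∫ a n dμ. Then for every ε > 0 there exist constants C > 0 and c > 0 such that μ { x ∈ X : a n x ≥ n · (λ + ε) } ≤ C · Real.exp (−c · n) for all integers n ≥ 1. -/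

import Mathlib

/-!
Pick `N` with `∫ a N < N (λ + ε/4)`. Splitting `[0, n)` into a head of length `j + 1`, blocks of
length `N` and a short tail, and averaging over the `N` phases `j`, subadditivity gives
`N · a n ≤ ∑_{l<n} a N ∘ f^l + O(N²)`. Hence `{a n ≥ n (λ + ε)}` is contained, for large `n`, in a
large deviation set for the Birkhoff sums of `a N`. Being upper semicontinuous and bounded, `a N`
is the pointwise limit of the Lipschitz functions `x ↦ sup_y (a N y - k · d(x, y)) ≥ a N`, so by
dominated convergence one of them, `F`, has `∫ F ≤ ∫ a N + N ε/4`, and the large deviation bound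
for `F` applies. Small `n` are absorbed into the constant.
-/

open MeasureTheory Filter Topology Finset

section LipschitzEnvelope

variable {X : Type*} [PseudoMetricSpace X]

noncomputable def lipschitzEnvelope (g : X → ℝ) (n : ℕ) (x : X) : ℝ :=
  ⨆ y, g y - n * dist x y

variable {g : X → ℝ} {M : ℝ}

lemma bddAbove_range_sub_mul_dist (hM : ∀ x, g x ≤ M) (n : ℕ) (x : X) :
    BddAbove (Set.range fun y => g y - n * dist x y) := by
  refine ⟨M, ?_⟩
  rintro _ ⟨y, rfl⟩
  have := hM y
  have : 0 ≤ (n : ℝ) * dist x y := by positivity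
  linarith

lemma le_lipschitzEnvelope (hM : ∀ x, g x ≤ M) (n : ℕ) (x : X) :
    g x ≤ lipschitzEnvelope g n x := by
  simpa [lipschitzEnvelope] using le_ciSup (bddAbove_range_sub_mul_dist hM n x) x

lemma lipschitzEnvelope_le (hM : ∀ x, g x ≤ M) (n : ℕ) (x : X) : lipschitzEnvelope g n x ≤ M := by
  have : Nonempty X := ⟨x⟩
  refine ciSup_le fun y => ?_
  have := hM y
  have : 0 ≤ (n : ℝ) * dist x y := by positivity
  linarith

lemma lipschitzWith_lipschitzEnvelope (hM : ∀ x, g x ≤ M) (n : ℕ) :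
    LipschitzWith n (lipschitzEnvelope g n) := by
  refine LipschitzWith.of_le_add_mul n fun x x' => ?_
  have : Nonempty X := ⟨x⟩
  refine ciSup_le fun y => ?_
  have h₁ : g y - n * dist x' y ≤ lipschitzEnvelope g n x' :=
    le_ciSup (bddAbove_range_sub_mul_dist hM n x') y
  have h₂ : dist x' y ≤ dist x x' + dist x y := by
    simpa only [dist_comm x x'] using dist_triangle x' x y
  have : (n : ℝ) * dist x' y ≤ n * (dist x x' + dist x y) := by gcongr
  push_cast
  linarith

lemma tendsto_lipschitzEnvelope (hg : UpperSemicontinuous g) (hM : ∀ x, g x ≤ M) (x : X) :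
    Tendsto (fun n => lipschitzEnvelope g n x) atTop (𝓝 (g x)) := by
  refine tendsto_order.2 ⟨fun b hb => .of_forall fun n =>
    hb.trans_le (le_lipschitzEnvelope hM n x), fun b hb => ?_⟩
  have : Nonempty X := ⟨x⟩
  obtain ⟨b', hxb', hb'b⟩ := exists_between hb
  obtain ⟨r, hr, hball⟩ := Metric.eventually_nhds_iff.1 (hg x b' hxb')
  filter_upwards [tendsto_natCast_atTop_atTop.eventually_ge_atTop ((M - b') / r)] with n hn
  refine lt_of_le_of_lt (ciSup_le fun y => ?_) hb'b
  have : 0 ≤ (n : ℝ) * dist x y := by positivity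
  by_cases hy : dist y x < r
  · linarith [hball hy]
  · have : M - b' ≤ n * r := (div_le_iff₀ hr).1 hn
    have : (n : ℝ) * r ≤ n * dist x y := by rw [dist_comm]; gcongr; linarith
    linarith [hM y]

lemma exists_lipschitz_ge_integral_le [MeasurableSpace X] [OpensMeasurableSpace X]
    (μ : Measure X) [IsFiniteMeasure μ] (hg : UpperSemicontinuous g) {m : ℝ} (hm : ∀ x, m ≤ g x)
    (hM : ∀ x, g x ≤ M) {δ : ℝ} (hδ : 0 < δ) :
    ∃ F : X → ℝ, (∃ K : NNReal, LipschitzWith K F) ∧ (∀ x, g x ≤ F x) ∧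
      ∫ x, F x ∂μ ≤ (∫ x, g x ∂μ) + δ := by
  have hbound : ∀ n x, ‖lipschitzEnvelope g n x‖ ≤ |m| + |M| := fun n x => by
    have := hm x
    have := le_lipschitzEnvelope hM n x
    have := lipschitzEnvelope_le hM n x
    rw [Real.norm_eq_abs, abs_le]
    constructor <;> linarith [neg_abs_le m, le_abs_self M, abs_nonneg m, abs_nonneg M]
  have hlim : Tendsto (fun n => ∫ x, lipschitzEnvelope g n x ∂μ) atTop (𝓝 (∫ x, g x ∂μ)) :=
    tendsto_integral_of_dominated_convergence (fun _ => |m| + |M|)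
      (fun n => (lipschitzWith_lipschitzEnvelope hM n).continuous.aestronglyMeasurable)
      (integrable_const _) (fun n => .of_forall (hbound n))
      (.of_forall (tendsto_lipschitzEnvelope hg hM))
  obtain ⟨n, hn⟩ := (hlim.eventually_lt_const (lt_add_of_pos_right _ hδ)).exists
  exact ⟨_, ⟨n, lipschitzWith_lipschitzEnvelope hM n⟩, le_lipschitzEnvelope hM n, hn.le⟩

end LipschitzEnvelope

lemma birkhoffSum_mul_eq_sum_birkhoffSum_iterate {α M : Type*} [AddCommMonoid M] (f : α → α)
    (g : α → M) (N q : ℕ) (x : α) :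
    birkhoffSum f g (N * q) x = ∑ j ∈ range N, birkhoffSum f^[N] g q (f^[j] x) := by
  induction q with
  | zero => simp
  | succ q ih =>
    simp only [Nat.mul_succ, birkhoffSum_add, ih, birkhoffSum_succ, sum_add_distrib]
    congr 1
    refine sum_congr rfl fun j _ => ?_
    rw [← Function.iterate_mul, ← Function.iterate_add_apply, ← Function.iterate_add_apply,
      add_comm]

lemma birkhoffSum_le_birkhoffSum_of_le {α : Type*} {f : α → α} {g : α → ℝ} (hg : ∀ x, 0 ≤ g x)
    {m n : ℕ} (hmn : m ≤ n) (x : α) : birkhoffSum f g m x ≤ birkhoffSum f g n x :=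
  sum_le_sum_of_subset_of_nonneg (range_mono hmn) fun _ _ _ => hg _

def IsSubadditiveCocycle {X : Type*} (f : X → X) (a : ℕ → X → ℝ) : Prop :=
  ∀ n s : ℕ, 1 ≤ n → 1 ≤ s → ∀ x, a (n + s) x ≤ a n (f^[s] x) + a s x

namespace IsSubadditiveCocycle

variable {X : Type*} {f : X → X} {a : ℕ → X → ℝ} {N : ℕ}

lemma le_birkhoffSum_add (ha : IsSubadditiveCocycle f a) (hN : 1 ≤ N) (q : ℕ) {r : ℕ}
    (hr : 1 ≤ r) (x : X) :
    a (N * q + r) x ≤ birkhoffSum f^[N] (a N) q x + a r ((f^[N])^[q] x) := by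
  induction q generalizing x with
  | zero => simp
  | succ q ih =>
    have hsplit := ha (N * q + r) N (by omega) hN x
    rw [show N * q + r + N = N * (q + 1) + r by ring] at hsplit
    rw [birkhoffSum_succ', Function.iterate_succ_apply]
    linarith [ih (f^[N] x)]

lemma le_add_birkhoffSum_add (ha : IsSubadditiveCocycle f a) (hN : 1 ≤ N) (q : ℕ) {r j : ℕ}
    (hr : 1 ≤ r) (hj : 1 ≤ j) (x : X) :
    a (N * q + r + j) x ≤ a j x + birkhoffSum f^[N] (a N) q (f^[j] x) +
      a r ((f^[N])^[q] (f^[j] x)) := by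
  linarith [ha (N * q + r) j (by omega) hj x, ha.le_birkhoffSum_add hN q hr (f^[j] x)]

lemma natCast_mul_le_birkhoffSum_add (ha : IsSubadditiveCocycle f a) (hN : 1 ≤ N) {C₀ : ℝ}
    (hbd : ∀ n : ℕ, 1 ≤ n → ∀ x, 0 ≤ a n x ∧ a n x ≤ n * C₀) {n : ℕ} (hn : N < n) (x : X) :
    N * a n x ≤ birkhoffSum f (a N) n x + 3 * N * N * C₀ := by
  have hC₀ : 0 ≤ C₀ := by simpa using (hbd 1 le_rfl x).1.trans (hbd 1 le_rfl x).2
  -- `N * q + N < n ≤ N * q + 2 * N + 1`, so every phase `j < N` leaves a tail of length in `[1, 2N]`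
  set q := (n - N - 1) / N
  have hq₁ : N * q ≤ n - N - 1 := Nat.mul_div_le _ _
  have hq₂ : n - N - 1 < N * q + N := by
    have := Nat.lt_mul_div_succ (n - N - 1) (show 0 < N by omega)
    rwa [mul_add, mul_one] at this
  have hphase : ∀ j ∈ range N,
      a n x ≤ birkhoffSum f^[N] (a N) q (f^[j] (f x)) + 3 * N * C₀ := by
    intro j hj
    rw [mem_range] at hj
    set r := n - N * q - (j + 1)
    have hdec := ha.le_add_birkhoffSum_add hN q (r := r) (j := j + 1) (by omega) (by omega) x
    rw [show N * q + r + (j + 1) = n by omega, Function.iterate_succ_apply] at hdec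
    have hhead := (hbd (j + 1) (by omega) x).2
    have htail := (hbd r (by omega) ((f^[N])^[q] (f^[j] (f x)))).2
    have : ((j + 1 : ℕ) : ℝ) * C₀ ≤ N * C₀ := by gcongr; exact_mod_cast hj
    have : (r : ℝ) * C₀ ≤ 2 * N * C₀ := by gcongr; exact_mod_cast (by omega : r ≤ 2 * N)
    linarith
  calc N * a n x = ∑ _j ∈ range N, a n x := by simp
    _ ≤ ∑ j ∈ range N, (birkhoffSum f^[N] (a N) q (f^[j] (f x)) + 3 * N * C₀) :=
      sum_le_sum hphase
    _ = birkhoffSum f (a N) (N * q) (f x) + 3 * N * N * C₀ := by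
      rw [sum_add_distrib, ← birkhoffSum_mul_eq_sum_birkhoffSum_iterate, sum_const, card_range,
        nsmul_eq_mul]
      ring
    _ ≤ birkhoffSum f (a N) (N * q + 1) x + 3 * N * N * C₀ := by
      rw [birkhoffSum_succ']
      linarith [(hbd N hN x).1]
    _ ≤ birkhoffSum f (a N) n x + 3 * N * N * C₀ := by
      gcongr
      exact birkhoffSum_le_birkhoffSum_of_le (fun y => (hbd N hN y).1) (by omega) x

end IsSubadditiveCocycle

lemma exists_lt_mul_add_of_eq_sInf (b : ℕ → ℝ) {L : ℝ}
    (hL : L = sInf {r : ℝ | ∃ n : ℕ, 1 ≤ n ∧ r = (1 / (n : ℝ)) * b n}) {δ : ℝ} (hδ : 0 < δ) :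
    ∃ N : ℕ, 1 ≤ N ∧ b N < N * (L + δ) := by
  have hne : {r : ℝ | ∃ n : ℕ, 1 ≤ n ∧ r = (1 / (n : ℝ)) * b n}.Nonempty := ⟨_, 1, le_rfl, rfl⟩
  obtain ⟨_, ⟨N, hN, rfl⟩, hlt⟩ := exists_lt_of_csInf_lt hne (hL ▸ lt_add_of_pos_right L hδ)
  refine ⟨N, hN, ?_⟩
  rwa [one_div, inv_mul_lt_iff₀ (by exact_mod_cast hN), ← hL] at hlt

lemma exists_exp_bound_of_eventually_le {X : Type*} [MeasurableSpace X] {μ : Measure X}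
    [IsProbabilityMeasure μ] {s : ℕ → Set X} {C c : ℝ} (hC : 0 < C) (hc : 0 ≤ c)
    (h : ∀ᶠ n : ℕ in atTop, μ (s n) ≤ ENNReal.ofReal (C * Real.exp (-c * n))) :
    ∃ C' > (0 : ℝ), ∀ n : ℕ, μ (s n) ≤ ENNReal.ofReal (C' * Real.exp (-c * n)) := by
  obtain ⟨n₁, hn₁⟩ := eventually_atTop.1 h
  refine ⟨max C (Real.exp (c * n₁)), hC.trans_le (le_max_left _ _), fun n => ?_⟩
  rcases le_or_gt n₁ n with hn | hn
  · refine (hn₁ n hn).trans (ENNReal.ofReal_le_ofReal ?_)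
    gcongr
    exact le_max_left _ _
  · refine prob_le_one.trans (ENNReal.one_le_ofReal.2 ?_)
    calc (1 : ℝ) ≤ Real.exp (c * n₁) * Real.exp (-c * n) := by
          rw [← Real.exp_add]
          exact Real.one_le_exp (by nlinarith [show (n : ℝ) ≤ n₁ by exact_mod_cast hn.le])
      _ ≤ _ := by gcongr; exact le_max_right _ _

theorem subadditive_cocycle_exponential_large_deviations_general
    {X : Type*} [MetricSpace X] [MeasurableSpace X] [BorelSpace X]
    (f : X → X) (μ : Measure X) [IsProbabilityMeasure μ]
    (hLD : ∀ F : X → ℝ, (∃ K : NNReal, LipschitzWith K F) → ∀ ε : ℝ, 0 < ε →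
      ∃ C > (0 : ℝ), ∃ c > (0 : ℝ), ∀ n : ℕ, 1 ≤ n →
        μ {x | (n : ℝ) * ((∫ y, F y ∂μ) + ε) ≤ ∑ l ∈ Finset.range n, F (f^[l] x)} ≤
          ENNReal.ofReal (C * Real.exp (-c * n)))
    (a : ℕ → X → ℝ)
    (hsub : ∀ n s : ℕ, 1 ≤ n → 1 ≤ s → ∀ x, a (n + s) x ≤ a n (f^[s] x) + a s x)
    (C₀ : ℝ)
    (hbd : ∀ n : ℕ, 1 ≤ n → ∀ x, 0 ≤ a n x ∧ a n x ≤ n * C₀)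
    (husc : ∀ n : ℕ, 1 ≤ n → UpperSemicontinuous (a n))
    (lam : ℝ)
    (hlam : lam = sInf {r : ℝ | ∃ n : ℕ, 1 ≤ n ∧ r = (1 / (n : ℝ)) * ∫ x, a n x ∂μ}) :
    ∀ ε : ℝ, 0 < ε → ∃ C > (0 : ℝ), ∃ c > (0 : ℝ), ∀ n : ℕ, 1 ≤ n →
      μ {x | (n : ℝ) * (lam + ε) ≤ a n x} ≤ ENNReal.ofReal (C * Real.exp (-c * n)) := by
  intro ε hε
  obtain ⟨N, hN, haN⟩ :=
    exists_lt_mul_add_of_eq_sInf (fun n => ∫ x, a n x ∂μ) hlam (by positivity : 0 < ε / 4)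
  have hN₀ : (0 : ℝ) < N := by exact_mod_cast hN
  obtain ⟨F, hFlip, haF, hF⟩ := exists_lipschitz_ge_integral_le μ (husc N hN)
    (fun x => (hbd N hN x).1) (fun x => (hbd N hN x).2) (by positivity : 0 < N * ε / 4)
  obtain ⟨C, hC, c, hc, hLDF⟩ := hLD F hFlip (N * ε / 4) (by positivity)
  have hlarge : ∀ᶠ n : ℕ in atTop,
      μ {x | (n : ℝ) * (lam + ε) ≤ a n x} ≤ ENNReal.ofReal (C * Real.exp (-c * n)) := by
    filter_upwards [eventually_gt_atTop N,
      tendsto_natCast_atTop_atTop.eventually_ge_atTop (12 * N * C₀ / ε)] with n hNn hn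
    refine (measure_mono fun x (hx : (n : ℝ) * (lam + ε) ≤ a n x) => ?_).trans (hLDF n (by omega))
    have hkey := IsSubadditiveCocycle.natCast_mul_le_birkhoffSum_add hsub hN hbd hNn x
    have hsum : birkhoffSum f (a N) n x ≤ ∑ l ∈ range n, F (f^[l] x) :=
      sum_le_sum fun l _ => haF _
    have : 12 * N * C₀ ≤ n * ε := (div_le_iff₀ hε).1 hn
    show (n : ℝ) * ((∫ y, F y ∂μ) + N * ε / 4) ≤ ∑ l ∈ range n, F (f^[l] x)
    nlinarith [mul_le_mul_of_nonneg_left hx hN₀.le]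
  obtain ⟨C', hC', hbound⟩ := exists_exp_bound_of_eventually_le hC hc.le hlarge
  exact ⟨C', hC', c, hc, fun n _ => hbound n⟩

/-- Let `X` be a compact metric space, `f` a Borel measurable map, and `μ`
an `f`-invariant Borel probability measure satisfying exponential large deviations for
Lipschitz observables. If `a` is a subadditive cocycle over `f` which is nonnegative,
bounded by `n * C₀`, and upper semicontinuous at each time `n`, and
`λ = inf_{n ≥ 1} (1/n) ∫ a n dμ`, then for every `ε > 0` there are `C, c > 0` with
`μ { x : a n x ≥ n (λ + ε) } ≤ C exp (-c n)` for all `n ≥ 1`. -/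
theorem subadditive_cocycle_exponential_large_deviations
    {X : Type*} [MetricSpace X] [CompactSpace X] [MeasurableSpace X] [BorelSpace X]
    (f : X → X) (μ : Measure X) [IsProbabilityMeasure μ]
    (hf : MeasurePreserving f μ μ)
    (hLD : ∀ F : X → ℝ, (∃ K : NNReal, LipschitzWith K F) → ∀ ε : ℝ, 0 < ε →
      ∃ C > (0 : ℝ), ∃ c > (0 : ℝ), ∀ n : ℕ, 1 ≤ n →
        μ {x | (n : ℝ) * ((∫ y, F y ∂μ) + ε) ≤ ∑ l ∈ Finset.range n, F (f^[l] x)} ≤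
          ENNReal.ofReal (C * Real.exp (-c * n)))
    (a : ℕ → X → ℝ)
    (hsub : ∀ n s : ℕ, 1 ≤ n → 1 ≤ s → ∀ x, a (n + s) x ≤ a n (f^[s] x) + a s x)
    (C₀ : ℝ) (hC₀ : 0 ≤ C₀)
    (hbd : ∀ n : ℕ, 1 ≤ n → ∀ x, 0 ≤ a n x ∧ a n x ≤ n * C₀)
    (husc : ∀ n : ℕ, 1 ≤ n → UpperSemicontinuous (a n))
    (lam : ℝ)
    (hlam : lam = sInf {r : ℝ | ∃ n : ℕ, 1 ≤ n ∧ r = (1 / (n : ℝ)) * ∫ x, a n x ∂μ}) :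
    ∀ ε : ℝ, 0 < ε → ∃ C > (0 : ℝ), ∃ c > (0 : ℝ), ∀ n : ℕ, 1 ≤ n →
      μ {x | (n : ℝ) * (lam + ε) ≤ a n x} ≤ ENNReal.ofReal (C * Real.exp (-c * n)) :=
  subadditive_cocycle_exponential_large_deviations_general f μ hLD a hsub C₀ hbd husc lam hlam
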